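/- Let A ∈ ℝ^{3×3}, B̃ ∈ ℝ^{3×2}, γ̃ > 0, let P ∈ ℝ^{3×3} be symmetric positive definite satisfying AᵀP + PA + I - (1/γ̃)·P B̃ B̃ᵀ P = 0, and set K = -(1/γ̃)·B̃ᵀP. Let x : ℝ → ℝ³ be differentiable with x'(t) = (A + B̃K)·x(t) for all t ≥ 0. Then x(t) → 0 as t → ∞. -/

import Mathlib

open Matrix

/-!
With `V y = yᵀ P y`, the Riccati equation turns into the closed-loop Lyapunov identity
`A_clᵀ P + P A_cl = -I - (1/γ) (BᵀP)ᵀ(BᵀP)`, so `V` decreases along trajectories at rate at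
least `‖x‖²`. Positive definiteness makes `V` comparable to `‖x‖²` from both sides (compactness
of the unit sphere), hence `V' ≤ -V / M`; Grönwall gives exponential decay of `V`, and with it
of `‖x‖`.
-/

open Filter Topology

section Calculus

variable {n : Type*} [Fintype n] {x y : ℝ → n → ℝ} {v w : n → ℝ} {t : ℝ}

theorem HasDerivAt.dotProduct (hx : HasDerivAt x v t) (hy : HasDerivAt y w t) :
    HasDerivAt (fun s => x s ⬝ᵥ y s) (v ⬝ᵥ y t + x t ⬝ᵥ w) t := by
  have := HasDerivAt.fun_sum (u := Finset.univ) fun i _ =>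
    (hasDerivAt_pi.1 hx i).fun_mul (hasDerivAt_pi.1 hy i)
  simpa only [_root_.dotProduct, Finset.sum_add_distrib] using this

theorem HasDerivAt.matrix_mulVec {m : Type*} (P : Matrix m n ℝ) (hx : HasDerivAt x v t) :
    HasDerivAt (fun s => P *ᵥ x s) (P *ᵥ v) t :=
  hasDerivAt_pi.2 fun i => HasDerivAt.fun_sum fun j _ => (hasDerivAt_pi.1 hx j).const_mul (P i j)

end Calculus

theorem sq_norm_le_dotProduct_self {n : Type*} [Fintype n] (y : n → ℝ) : ‖y‖ ^ 2 ≤ y ⬝ᵥ y := by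
  have hy : ‖y‖ ≤ √(y ⬝ᵥ y) := by
    refine (pi_norm_le_iff_of_nonneg (Real.sqrt_nonneg _)).2 fun i => ?_
    rw [Real.norm_eq_abs, ← Real.sqrt_sq_eq_abs]
    exact Real.sqrt_le_sqrt <| by
      simpa only [sq, dotProduct] using
        Finset.single_le_sum (fun j _ => mul_self_nonneg (y j)) (Finset.mem_univ i)
  calc ‖y‖ ^ 2 ≤ √(y ⬝ᵥ y) ^ 2 := by gcongr
    _ = y ⬝ᵥ y := Real.sq_sqrt (Finset.sum_nonneg fun j _ => mul_self_nonneg (y j))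

section Homogeneous

variable {E : Type*} [NormedAddCommGroup E] [NormedSpace ℝ E] {f : E → ℝ}

theorem exists_mem_sphere_eq_norm_sq_mul (hf : ∀ (c : ℝ) y, f (c • y) = c ^ 2 * f y) {y : E}
    (hy : y ≠ 0) : ∃ u ∈ Metric.sphere (0 : E) 1, f y = ‖y‖ ^ 2 * f u := by
  refine ⟨‖y‖⁻¹ • y, by simpa using norm_smul_inv_norm (𝕜 := ℝ) hy, ?_⟩
  rw [hf, ← mul_assoc, ← mul_pow, mul_inv_cancel₀ (norm_ne_zero_iff.2 hy), one_pow, one_mul]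

variable [ProperSpace E]

theorem exists_pos_mul_norm_sq_le (hf : Continuous f)
    (hhom : ∀ (c : ℝ) y, f (c • y) = c ^ 2 * f y) (hpos : ∀ y, y ≠ 0 → 0 < f y) :
    ∃ m, 0 < m ∧ ∀ y, m * ‖y‖ ^ 2 ≤ f y := by
  obtain ⟨m, hm, hmf⟩ := (isCompact_sphere (0 : E) 1).exists_forall_le' hf.continuousOn
    fun u hu => hpos u (ne_zero_of_mem_unit_sphere ⟨u, hu⟩)
  refine ⟨m, hm, fun y => ?_⟩
  rcases eq_or_ne y 0 with rfl | hy
  · simpa using (hhom 0 0).ge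
  · obtain ⟨u, hu, hyu⟩ := exists_mem_sphere_eq_norm_sq_mul hhom hy
    rw [hyu, mul_comm]
    exact mul_le_mul_of_nonneg_left (hmf u hu) (by positivity)

theorem exists_pos_le_mul_norm_sq (hf : Continuous f)
    (hhom : ∀ (c : ℝ) y, f (c • y) = c ^ 2 * f y) :
    ∃ M, 0 < M ∧ ∀ y, f y ≤ M * ‖y‖ ^ 2 := by
  obtain ⟨C, hC⟩ := (isCompact_sphere (0 : E) 1).exists_bound_of_continuousOn hf.continuousOn
  refine ⟨max C 1, by positivity, fun y => ?_⟩
  rcases eq_or_ne y 0 with rfl | hy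
  · simpa using (hhom 0 0).le
  · obtain ⟨u, hu, hyu⟩ := exists_mem_sphere_eq_norm_sq_mul hhom hy
    rw [hyu, mul_comm]
    exact mul_le_mul_of_nonneg_right (((le_abs_self _).trans (hC u hu)).trans (le_max_left _ _))
      (by positivity)

end Homogeneous

theorem smul_dotProduct_mulVec_smul {n : Type*} [Fintype n] (P : Matrix n n ℝ) (c : ℝ)
    (y : n → ℝ) : c • y ⬝ᵥ P *ᵥ (c • y) = c ^ 2 * (y ⬝ᵥ P *ᵥ y) := by
  rw [mulVec_smul, smul_dotProduct, dotProduct_smul, smul_eq_mul, smul_eq_mul, sq, mul_assoc]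

theorem le_mul_exp_of_hasDerivAt_le {f f' : ℝ → ℝ} {c : ℝ}
    (hf : ∀ t, 0 ≤ t → HasDerivAt f (f' t) t) (hbound : ∀ t, 0 ≤ t → f' t ≤ -c * f t) {t : ℝ}
    (ht : 0 ≤ t) : f t ≤ f 0 * Real.exp (-c * t) := by
  have := le_gronwallBound_of_liminf_deriv_right_le (K := -c) (ε := 0) (b := t)
    (fun s hs => (hf s hs.1).continuousAt.continuousWithinAt)
    (fun s hs r hr => by
      simpa only [slope_def_field, div_eq_inv_mul] using
        (hf s hs.1).hasDerivWithinAt.liminf_right_slope_le hr)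
    le_rfl (fun s hs => (hbound s hs.1).trans_eq (add_zero _).symm) t ⟨ht, le_rfl⟩
  rwa [gronwallBound_ε0, sub_zero] at this

theorem tendsto_zero_of_hasDerivAt_le_neg_mul {f f' : ℝ → ℝ} {c : ℝ} (hc : 0 < c)
    (hf₀ : ∀ t, 0 ≤ f t) (hf : ∀ t, 0 ≤ t → HasDerivAt f (f' t) t)
    (hbound : ∀ t, 0 ≤ t → f' t ≤ -c * f t) : Tendsto f atTop (𝓝 0) := by
  have hexp : Tendsto (fun t => f 0 * Real.exp (-c * t)) atTop (𝓝 0) := by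
    simpa using (Real.tendsto_exp_atBot.comp
      (tendsto_id.const_mul_atTop_of_neg (neg_neg_iff_pos.2 hc))).const_mul (f 0)
  refine tendsto_of_tendsto_of_tendsto_of_le_of_le' tendsto_const_nhds hexp
    (Eventually.of_forall hf₀) ?_
  filter_upwards [eventually_ge_atTop 0] with t ht using le_mul_exp_of_hasDerivAt_le hf hbound ht

theorem dotProduct_mulVec_add_dotProduct_mulVec {n : Type*} [Fintype n] (M P : Matrix n n ℝ)
    (y : n → ℝ) : M *ᵥ y ⬝ᵥ P *ᵥ y + y ⬝ᵥ P *ᵥ (M *ᵥ y) = y ⬝ᵥ (Mᵀ * P + P * M) *ᵥ y := by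
  rw [add_mulVec, dotProduct_add, ← mulVec_mulVec, ← mulVec_mulVec, dotProduct_mulVec y Mᵀ,
    vecMul_transpose]

section Riccati

variable {n k : Type*} [Fintype n] [Fintype k] [DecidableEq n]
  (A P : Matrix n n ℝ) (B : Matrix n k ℝ) (γ : ℝ)

noncomputable def riccatiClosedLoop : Matrix n n ℝ := A + B * (-(1 / γ) • (Bᵀ * P))

variable {A P B γ}

theorem riccatiClosedLoop_lyapunov (hP : Pᵀ = P)
    (hric : Aᵀ * P + P * A + 1 - (1 / γ) • (P * B * Bᵀ * P) = 0) :
    (riccatiClosedLoop A P B γ)ᵀ * P + P * riccatiClosedLoop A P B γ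
      = -1 - (1 / γ) • ((Bᵀ * P)ᵀ * (Bᵀ * P)) := by
  simp only [riccatiClosedLoop, transpose_add, transpose_mul, transpose_smul, transpose_transpose,
    hP, Matrix.add_mul, Matrix.mul_add, Matrix.mul_smul, Matrix.smul_mul]
  simp only [← Matrix.mul_assoc]
  linear_combination (norm := module) hric

theorem riccatiClosedLoop_quadForm_deriv_le (hγ : 0 < γ) (hP : Pᵀ = P)
    (hric : Aᵀ * P + P * A + 1 - (1 / γ) • (P * B * Bᵀ * P) = 0) (y : n → ℝ) :
    riccatiClosedLoop A P B γ *ᵥ y ⬝ᵥ P *ᵥ y + y ⬝ᵥ P *ᵥ (riccatiClosedLoop A P B γ *ᵥ y)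
      ≤ -‖y‖ ^ 2 := by
  rw [dotProduct_mulVec_add_dotProduct_mulVec, riccatiClosedLoop_lyapunov hP hric, sub_mulVec,
    neg_mulVec, one_mulVec, smul_mulVec, ← mulVec_mulVec, dotProduct_sub, dotProduct_neg,
    dotProduct_smul, smul_eq_mul, dotProduct_mulVec y (Bᵀ * P)ᵀ, vecMul_transpose]
  have hgain : 0 ≤ 1 / γ * ((Bᵀ * P) *ᵥ y ⬝ᵥ (Bᵀ * P) *ᵥ y) :=
    mul_nonneg (by positivity) (Finset.sum_nonneg fun i _ => mul_self_nonneg _)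
  linarith [sq_norm_le_dotProduct_self y]

end Riccati

theorem riccati_closed_loop_convergence_general (A P : Matrix (Fin 3) (Fin 3) ℝ)
    (B : Matrix (Fin 3) (Fin 2) ℝ) (γ : ℝ) (hγ : 0 < γ)
    (hP : Pᵀ = P) (hPpos : ∀ y : Fin 3 → ℝ, y ≠ 0 → 0 < y ⬝ᵥ P.mulVec y)
    (hric : Aᵀ * P + P * A + 1 - (1 / γ) • (P * B * Bᵀ * P) = 0)
    (x : ℝ → Fin 3 → ℝ)
    (hx : ∀ t : ℝ, 0 ≤ t →
      HasDerivAt x ((A + B * (-(1 / γ) • (Bᵀ * P))).mulVec (x t)) t) :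
    Filter.Tendsto x Filter.atTop (nhds 0) := by
  set V : (Fin 3 → ℝ) → ℝ := fun y => y ⬝ᵥ P *ᵥ y
  have hVcont : Continuous V :=
    continuous_id.dotProduct (continuous_const.matrix_mulVec continuous_id)
  obtain ⟨m, hm, hVlow⟩ := exists_pos_mul_norm_sq_le hVcont (smul_dotProduct_mulVec_smul P) hPpos
  obtain ⟨M, hM, hVup⟩ := exists_pos_le_mul_norm_sq hVcont (smul_dotProduct_mulVec_smul P)
  have hVx : Tendsto (fun t => V (x t)) atTop (𝓝 0) := by
    refine tendsto_zero_of_hasDerivAt_le_neg_mul (inv_pos.2 hM)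
      (fun t => (by positivity : 0 ≤ m * ‖x t‖ ^ 2).trans (hVlow _))
      (fun t ht => (hx t ht).dotProduct ((hx t ht).matrix_mulVec P)) fun t ht => ?_
    calc _ ≤ -‖x t‖ ^ 2 := riccatiClosedLoop_quadForm_deriv_le hγ hP hric (x t)
      _ ≤ -M⁻¹ * V (x t) := by
        rw [neg_mul, neg_le_neg_iff, inv_mul_le_iff₀ hM]
        exact hVup _
  have hsq : Tendsto (fun t => ‖x t‖ ^ 2) atTop (𝓝 0) := by
    refine tendsto_of_tendsto_of_tendsto_of_le_of_le tendsto_const_nhds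
      (by simpa using hVx.div_const m) (fun t => by positivity) fun t => ?_
    rw [le_div_iff₀ hm, mul_comm]
    exact hVlow _
  rw [tendsto_zero_iff_norm_tendsto_zero]
  simpa [Function.comp_def, Real.sqrt_sq_eq_abs] using (Real.continuous_sqrt.tendsto 0).comp hsq

/-- let `P = Pᵀ` be positive definite and solve the Riccati equation
`AᵀP + PA + I - (1/γ̃)·P B̃ B̃ᵀ P = 0` with `γ̃ > 0`, `K = -(1/γ̃)·B̃ᵀP`, and let
`x : ℝ → ℝ³` be differentiable with `x' = (A + B̃K) x` for all `t ≥ 0`.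
Then `x(t) → 0` as `t → ∞`. -/
theorem riccati_closed_loop_convergence (A P : Matrix (Fin 3) (Fin 3) ℝ)
    (B : Matrix (Fin 3) (Fin 2) ℝ) (γ : ℝ) (hγ : 0 < γ)
    (hP : Pᵀ = P) (hPpos : ∀ y : Fin 3 → ℝ, y ≠ 0 → 0 < y ⬝ᵥ P.mulVec y)
    (hric : Aᵀ * P + P * A + 1 - (1 / γ) • (P * B * Bᵀ * P) = 0)
    (x : ℝ → Fin 3 → ℝ) (hdiff : Differentiable ℝ x)
    (hx : ∀ t : ℝ, 0 ≤ t →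
      HasDerivAt x ((A + B * (-(1 / γ) • (Bᵀ * P))).mulVec (x t)) t) :
    Filter.Tendsto x Filter.atTop (nhds 0) :=
  riccati_closed_loop_convergence_general A P B γ hγ hP hPpos hric x hx
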